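/- Let d > 2 and T ∈ ℝ^{m₁×...×m_d}, with F as above. If (u₁,...,u_d) is a nonzero fixed point of F, then ‖u₁‖ = ‖u₂‖ = ... = ‖u_d‖ > 0, and the normalized vectors x_i = u_i/‖u₁‖ are unit vectors satisfying the singular value equations T ×(⊗_{j≠i} x_j) = λ x_i with λ = ‖u₁‖^{−(d−2)}. -/

import Mathlib

open scoped BigOperators
open RealInnerProductSpace

/-- The contraction `T × (⊗_{j ≠ i} x_j) ∈ ℝ^{m_i}`, with `k`-th entry
`∑_{idx, idx i = k} T idx * ∏_{j ≠ i} x j (idx j)`. -/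
noncomputable def contra {d : ℕ} {m : Fin d → ℕ}
    (T : EuclideanSpace ℝ (∀ i, Fin (m i)))
    (x : ∀ i, EuclideanSpace ℝ (Fin (m i))) (i : Fin d) :
    EuclideanSpace ℝ (Fin (m i)) :=
  (WithLp.equiv 2 _).symm fun k =>
    ∑ idx : ∀ j, Fin (m j),
      if idx i = k then T idx * ∏ j ∈ Finset.univ.erase i, x j (idx j) else 0

lemma contra_apply {d : ℕ} {m : Fin d → ℕ}
    (T : EuclideanSpace ℝ (∀ i, Fin (m i)))
    (x : ∀ i, EuclideanSpace ℝ (Fin (m i))) (i : Fin d) (k : Fin (m i)) :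
    contra T x i k =
      ∑ idx : ∀ j, Fin (m j),
        if idx i = k then T idx * ∏ j ∈ Finset.univ.erase i, x j (idx j) else 0 := rfl

lemma contra_smul {d : ℕ} {m : Fin d → ℕ}
    (T : EuclideanSpace ℝ (∀ i, Fin (m i)))
    (u : ∀ i, EuclideanSpace ℝ (Fin (m i))) (a : ℝ) (i : Fin d) :
    contra T (fun j => a • u j) i = a ^ (d - 1) • contra T u i := by
  ext k
  have hcard : (Finset.univ.erase i).card = d - 1 := by
    rw [Finset.card_erase_of_mem (Finset.mem_univ i)]
    simp
  simp only [contra_apply, PiLp.smul_apply, smul_eq_mul, Finset.mul_sum]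
  refine Finset.sum_congr rfl fun idx _ => ?_
  rw [Finset.prod_mul_distrib, Finset.prod_const, hcard]
  split <;> ring

lemma inner_contra {d : ℕ} {m : Fin d → ℕ}
    (T : EuclideanSpace ℝ (∀ i, Fin (m i)))
    (u : ∀ i, EuclideanSpace ℝ (Fin (m i))) (i : Fin d) :
    ⟪u i, contra T u i⟫ = ∑ idx : ∀ j, Fin (m j), T idx * ∏ j, u j (idx j) := by
  rw [PiLp.inner_apply]
  simp only [RCLike.inner_apply, conj_trivial, contra_apply, Finset.mul_sum, Finset.sum_mul]
  rw [Finset.sum_comm]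
  refine Finset.sum_congr rfl fun idx _ => ?_
  simp only [mul_ite, mul_zero, ite_mul, zero_mul]
  rw [Finset.sum_ite_eq (Finset.univ) (idx i)]
  simp only [Finset.mem_univ, if_true]
  rw [← Finset.mul_prod_erase Finset.univ (fun j => u j (idx j)) (Finset.mem_univ i)]
  ring

/-- For `d > 2`: if `(u₁,…,u_d)` is a nonzero fixed point of `F`,
`F_i(u) = T×(⊗_{j≠i}u_j)`, then all `‖u_i‖` are equal and positive, the normalized
vectors `x_i = u_i/‖u_{i₀}‖` are unit vectors, and they satisfy the singular value
equations with `λ = ‖u_{i₀}‖^{-(d-2)}`. -/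
theorem fixed_point_to_singular {d : ℕ} {m : Fin d → ℕ} (hd : 2 < d)
    (T : EuclideanSpace ℝ (∀ i, Fin (m i)))
    (u : ∀ i, EuclideanSpace ℝ (Fin (m i)))
    (hfix : ∀ i, contra T u i = u i) (hne : u ≠ 0) :
    (∀ i j, ‖u i‖ = ‖u j‖) ∧
    ∀ i0 : Fin d, 0 < ‖u i0‖ ∧
      (∀ i, ‖(‖u i0‖)⁻¹ • u i‖ = 1) ∧
      (∀ i, contra T (fun j => (‖u i0‖)⁻¹ • u j) i
          = (‖u i0‖ ^ (-((d : ℝ) - 2))) • ((‖u i0‖)⁻¹ • u i)) := by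
  set c : ℝ := ∑ idx : ∀ j, Fin (m j), T idx * ∏ j, u j (idx j) with hc
  have hsq : ∀ i, ‖u i‖ ^ 2 = c := by
    intro i
    rw [← real_inner_self_eq_norm_sq]
    nth_rewrite 2 [← hfix i]
    exact inner_contra T u i
  have heq : ∀ i j, ‖u i‖ = ‖u j‖ := fun i j => by
    have h := (hsq i).trans (hsq j).symm
    nlinarith [norm_nonneg (u i), norm_nonneg (u j)]
  refine ⟨heq, fun i0 => ?_⟩
  obtain ⟨i1, hi1⟩ : ∃ i, u i ≠ 0 := by
    by_contra h
    push_neg at h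
    exact hne (funext h)
  have hr : 0 < ‖u i0‖ := by
    rw [heq i0 i1]
    exact norm_pos_iff.mpr hi1
  set r : ℝ := ‖u i0‖
  refine ⟨hr, fun i => ?_, fun i => ?_⟩
  · rw [norm_smul, norm_inv, norm_norm, heq i i0, inv_mul_cancel₀ hr.ne']
  · rw [contra_smul, hfix i, smul_smul]
    congr 1
    have h1 : (1:ℕ) ≤ d := by omega
    have : r⁻¹ ^ (d - 1) = r ^ ((1:ℝ) - d) := by
      rw [inv_pow, ← Real.rpow_natCast r (d-1), ← Real.rpow_neg hr.le]
      congr 1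
      rw [Nat.cast_sub h1]
      push_cast
      ring
    rw [this, ← Real.rpow_neg_one r, ← Real.rpow_add hr]
    congr 1
    ring
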